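/- arXiv:2505.01204 — 2 statements merged into one kernel-verified Lean document; each statement's English description precedes it below -/
import Mathlib

section
/- Let R be a discrete valuation ring with uniformizer ξ and residue field κ = R/(ξ), let k_1 ≥ … ≥ k_n be integers, and let H = { A ∈ GL_n(R) : ξ^{k_i − k_j} ∣ A_{ij} whenever k_i > k_j }. Then the image of H under the reduction map GL_n(R) → GL_n(κ) is exactly the block upper-triangular parabolic subgroup P = { B ∈ GL_n(κ) : B_{ij} = 0 whenever k_i > k_j }. -/
/-!
Reduction kills every entry divisible by a positive power of `ξ`, so it maps `H` into `P`.
Conversely, lift `B ∈ P` entrywise, choosing `0` wherever `B` is forced to vanish; the lift lies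
in `H`, and its determinant is a unit because it reduces to one and `R` is local.
-/

open Matrix

theorem Matrix.exists_map_eq_and_eq_zero_of_surjective {m n R S : Type*} [Semiring R] [Semiring S]
    (f : R →+* S) (hf : Function.Surjective f) (p : m → n → Prop) (B : Matrix m n S)
    (hB : ∀ i j, p i j → B i j = 0) :
    ∃ A : Matrix m n R, A.map f = B ∧ ∀ i j, p i j → A i j = 0 := by
  classical
  refine ⟨of fun i j => if p i j then 0 else Function.surjInv hf (B i j), ?_, fun i j h => if_pos h⟩
  ext i j
  by_cases h : p i j
  · simp [h, hB i j h]
  · simp [h, Function.surjInv_eq hf]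

theorem stmt6_general {R : Type*} [CommRing R] [IsDomain R] [IsDiscreteValuationRing R]
    (ξ : R) (hξ : Irreducible ξ) (n : ℕ) (k : Fin n → ℤ) :
    (fun A : Matrix (Fin n) (Fin n) R =>
        A.map (Ideal.Quotient.mk (Ideal.span {ξ}))) ''
      {A : Matrix (Fin n) (Fin n) R | IsUnit A.det ∧
        ∀ i j, k j < k i → ξ ^ (k i - k j).toNat ∣ A i j} =
    {B : Matrix (Fin n) (Fin n) (R ⧸ Ideal.span {ξ}) | IsUnit B.det ∧
        ∀ i j, k j < k i → B i j = 0} := by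
  set π := Ideal.Quotient.mk (Ideal.span {ξ})
  have : Nontrivial (R ⧸ Ideal.span {ξ}) :=
    Ideal.Quotient.nontrivial_iff.2 (by simpa [Ideal.span_singleton_eq_top] using hξ.not_isUnit)
  have : IsLocalHom π := .of_surjective π Ideal.Quotient.mk_surjective
  have det_map (A : Matrix (Fin n) (Fin n) R) : (A.map π).det = π A.det :=
    (RingHom.map_det π A).symm
  ext B
  constructor
  · rintro ⟨A, ⟨hdet, hdvd⟩, rfl⟩
    refine ⟨det_map A ▸ hdet.map π, fun i j hij => ?_⟩
    have hξA : ξ ∣ A i j := (dvd_pow_self ξ (by omega)).trans (hdvd i j hij)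
    exact Ideal.Quotient.eq_zero_iff_mem.2 (Ideal.mem_span_singleton.2 hξA)
  · rintro ⟨hdet, hzero⟩
    obtain ⟨A, rfl, hA⟩ :=
      exists_map_eq_and_eq_zero_of_surjective π Ideal.Quotient.mk_surjective _ B hzero
    refine ⟨A, ⟨(isUnit_map_iff π _).1 (det_map A ▸ hdet), fun i j hij => ?_⟩, rfl⟩
    rw [hA i j hij]
    exact dvd_zero _

/-- For `R` a DVR with uniformizer `ξ` and residue field `κ = R/(ξ)`,
and `k_1 ≥ … ≥ k_n`, the image of
`H = { A ∈ GL_n(R) : ξ^{k_i-k_j} ∣ A_{ij} whenever k_i > k_j }` under reduction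
`GL_n(R) → GL_n(κ)` is exactly the parabolic
`P = { B ∈ GL_n(κ) : B_{ij} = 0 whenever k_i > k_j }`. -/
theorem stmt6 {R : Type*} [CommRing R] [IsDomain R] [IsDiscreteValuationRing R]
    (ξ : R) (hξ : Irreducible ξ) (n : ℕ) (k : Fin n → ℤ) (hk : Antitone k) :
    (fun A : Matrix (Fin n) (Fin n) R =>
        A.map (Ideal.Quotient.mk (Ideal.span {ξ}))) ''
      {A : Matrix (Fin n) (Fin n) R | IsUnit A.det ∧
        ∀ i j, k j < k i → ξ ^ (k i - k j).toNat ∣ A i j} =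
    {B : Matrix (Fin n) (Fin n) (R ⧸ Ideal.span {ξ}) | IsUnit B.det ∧
        ∀ i j, k j < k i → B i j = 0} :=
  stmt6_general ξ hξ n k
end

section
/- Let k_1 ≥ … ≥ k_n be a nonincreasing tuple of integers partitioned into consecutive blocks B_1, …, B_s of sizes r_1, …, r_s, where block B_t consists of an arithmetic progression m_t, m_t − c, m_t − 2c, …, m_t − (r_t − 1)c for a common even integer c ≥ 0. Define a new tuple by replacing, in each block B_t, the progression with m_t + r_t − 1, (m_t + r_t − 1) − (c+2), …, i.e. new top weight m_t + r_t − 1 and new common difference c + 2, and then sorting the result into nonincreasing order to get k'_1 ≥ … ≥ k'_n. If at least one block has size r_t > 1, then (k'_1, …, k'_n) > (k_1, …, k_n) in the lexicographic order. -/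
/-!
Concatenating the old blocks in order already gives the sorted old tuple, because each block is
decreasing and lies above the next one. Concatenating the new blocks in the same order gives a
list that agrees with it on every block of size `1` and, at the first block of size `r > 1`,
starts with `m + r - 1 > m`; so it is lexicographically larger. Sorting a list into
nonincreasing order can only increase it lexicographically.
-/

namespace List

theorem Perm.lex_lt_or_eq_of_pairwise_ge {α : Type*} [LinearOrder α] {l₁ l₂ : List α}
    (hp : l₁.Perm l₂) (hs : l₂.Pairwise (· ≥ ·)) : Lex (· < ·) l₁ l₂ ∨ l₁ = l₂ := by
  induction l₂ generalizing l₁ with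
  | nil => exact .inr hp.eq_nil
  | cons b l₂ ih =>
    cases l₁ with
    | nil => exact .inl .nil
    | cons a l₁ =>
      have hab : a ≤ b := by
        rcases mem_cons.mp (hp.subset mem_cons_self) with rfl | ha
        · exact le_rfl
        · exact rel_of_pairwise_cons hs ha
      rcases hab.lt_or_eq with hlt | rfl
      · exact .inl (.rel hlt)
      · rcases ih hp.cons_inv hs.of_cons with h | rfl
        · exact .inl (.cons h)
        · exact .inr rfl

theorem lex_flatten_map {ι α : Type*} {R : α → α → Prop} {L : List ι} {f g : ι → List α}
    (h : ∀ i ∈ L, f i = g i ∨ ∃ a b l l', f i = a :: l ∧ g i = b :: l' ∧ R a b)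
    (hne : ∃ i ∈ L, f i ≠ g i) : Lex R (L.map f).flatten (L.map g).flatten := by
  induction L with
  | nil => simp at hne
  | cons i L ih =>
    simp only [map_cons, flatten_cons]
    rcases h i mem_cons_self with heq | ⟨a, b, l, l', hf, hg, hab⟩
    · rw [heq]
      refine .append_left R (ih (fun j hj => h j (mem_cons_of_mem _ hj)) ?_) _
      obtain ⟨j, hj, hfg⟩ := hne
      rcases mem_cons.mp hj with rfl | hj
      · exact absurd heq hfg
      · exact ⟨j, hj, hfg⟩
    · rw [hf, hg]
      exact .rel hab

theorem Lex.lt_sort_ge {α : Type*} [LinearOrder α] {l₀ l : List α} (h : Lex (· < ·) l₀ l) :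
    Lex (· < ·) l₀ (Multiset.sort (l : Multiset α) (· ≥ ·)) := by
  have hp : l.Perm (Multiset.sort (l : Multiset α) (· ≥ ·)) :=
    Multiset.coe_eq_coe.mp (Multiset.sort_eq _ _).symm
  rcases hp.lex_lt_or_eq_of_pairwise_ge (Multiset.pairwise_sort _ _) with hl | hl
  · exact lex_trans lt_trans h hl
  · exact hl ▸ h

end List

theorem Fin.sum_coe_eq_coe_flatten {α : Type*} {n : ℕ} (f : Fin n → List α) :
    ∑ i, (f i : Multiset α) = (((List.finRange n).map f).flatten : Multiset α) := by
  rw [Fin.sum_univ_def, ← Multiset.coe_join, List.map_map]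
  rfl

def arithProg (a d : ℤ) (n : ℕ) : List ℤ :=
  (List.range n).map fun j : ℕ => a - d * (j : ℤ)

section ArithProg

variable {a d x : ℤ} {n : ℕ}

theorem coe_arithProg (a d : ℤ) (n : ℕ) :
    (arithProg a d n : Multiset ℤ) = (Multiset.range n).map fun j : ℕ => a - d * (j : ℤ) :=
  rfl

@[simp]
theorem arithProg_zero (a d : ℤ) : arithProg a d 0 = [] :=
  rfl

theorem arithProg_succ (a d : ℤ) (n : ℕ) :
    arithProg a d (n + 1) = a :: arithProg (a - d) d n := by
  simp only [arithProg, List.range_succ_eq_map, List.map_cons, List.map_map]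
  congr 1
  · simp
  · congr 1; funext j; simp only [Function.comp_apply, Nat.cast_succ]; ring

theorem exists_arithProg_eq_cons (hn : 1 ≤ n) : ∃ l, arithProg a d n = a :: l := by
  obtain ⟨k, rfl⟩ := Nat.exists_eq_add_of_le' hn
  exact ⟨_, arithProg_succ a d k⟩

theorem arithProg_eq_of_le_one (hn : n ≤ 1) (d' : ℤ) :
    arithProg a d n = arithProg (a + n - 1) d' n := by
  interval_cases n <;> simp [arithProg_succ]

theorem pairwise_ge_arithProg (hd : 0 ≤ d) : (arithProg a d n).Pairwise (· ≥ ·) := by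
  refine List.pairwise_map.mpr (List.pairwise_lt_range.imp fun {i j} hij => ?_)
  have hij' : (i : ℤ) ≤ j := by exact_mod_cast hij.le
  exact sub_le_sub_left (mul_le_mul_of_nonneg_left hij' hd) a

theorem le_of_mem_arithProg (hd : 0 ≤ d) (hx : x ∈ arithProg a d n) : x ≤ a := by
  obtain ⟨j, -, rfl⟩ := List.mem_map.mp hx
  exact sub_le_self a (mul_nonneg hd j.cast_nonneg)

theorem ge_of_mem_arithProg (hd : 0 ≤ d) (hx : x ∈ arithProg a d n) : a - d * (n - 1) ≤ x := by
  obtain ⟨j, hj, rfl⟩ := List.mem_map.mp hx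
  have hjn : (j : ℤ) ≤ n - 1 := by have := List.mem_range.mp hj; omega
  exact sub_le_sub_left (mul_le_mul_of_nonneg_left hjn hd) a

end ArithProg

section Blocks

variable {s : ℕ} {r : Fin s → ℕ} {m : Fin s → ℤ} {c : ℤ}

theorem pairwise_ge_flatten_arithProg (hc : 0 ≤ c)
    (hsorted : ∀ t t' : Fin s, t < t' → m t' ≤ m t - c * ((r t : ℤ) - 1)) :
    ((List.finRange s).map fun t => arithProg (m t) c (r t)).flatten.Pairwise (· ≥ ·) := by
  refine List.pairwise_flatten.mpr ⟨?_, ?_⟩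
  · simp only [List.mem_map]
    rintro _ ⟨t, -, rfl⟩
    exact pairwise_ge_arithProg hc
  · refine List.pairwise_map.mpr ((List.pairwise_lt_finRange s).imp fun {t t'} htt' x hx y hy => ?_)
    have := ge_of_mem_arithProg hc hx
    have := le_of_mem_arithProg hc hy
    have := hsorted t t' htt'
    omega

theorem lex_flatten_arithProg_shift (d d' : ℤ) (hbig : ∃ t, 1 < r t) :
    List.Lex (· < ·) ((List.finRange s).map fun t => arithProg (m t) d (r t)).flatten
      ((List.finRange s).map fun t => arithProg (m t + r t - 1) d' (r t)).flatten := by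
  have hhead (t) (ht : 1 ≤ r t) : ∃ l l', arithProg (m t) d (r t) = m t :: l ∧
      arithProg (m t + r t - 1) d' (r t) = (m t + r t - 1) :: l' := by
    obtain ⟨l, hl⟩ := exists_arithProg_eq_cons (a := m t) (d := d) ht
    obtain ⟨l', hl'⟩ := exists_arithProg_eq_cons (a := m t + r t - 1) (d := d') ht
    exact ⟨l, l', hl, hl'⟩
  refine List.lex_flatten_map (fun t _ => ?_) ?_
  · rcases le_or_gt (r t) 1 with ht | ht
    · exact .inl (arithProg_eq_of_le_one ht _)
    · obtain ⟨l, l', hl, hl'⟩ := hhead t ht.le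
      exact .inr ⟨_, _, _, _, hl, hl', by omega⟩
  · obtain ⟨t, ht⟩ := hbig
    obtain ⟨l, l', hl, hl'⟩ := hhead t ht.le
    refine ⟨t, List.mem_finRange t, fun h => ?_⟩
    rw [hl, hl', List.cons.injEq] at h
    omega

end Blocks

theorem stmt14_general (s : ℕ) (r : Fin s → ℕ) (m : Fin s → ℤ) (c : ℤ)
    (hc : 0 ≤ c)
    (hsorted : ∀ t t' : Fin s, t < t' → m t' ≤ m t - c * ((r t : ℤ) - 1))
    (hbig : ∃ t, 1 < r t) :
    List.Lex (· < ·)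
      (Multiset.sort
        (∑ t : Fin s, Multiset.map (fun j : ℕ => m t - c * (j : ℤ))
          (Multiset.range (r t))) (· ≥ ·))
      (Multiset.sort
        (∑ t : Fin s, Multiset.map
          (fun j : ℕ => (m t + (r t : ℤ) - 1) - (c + 2) * (j : ℤ))
          (Multiset.range (r t))) (· ≥ ·)) := by
  simp only [← coe_arithProg, Fin.sum_coe_eq_coe_flatten]
  rw [Multiset.coe_sort, List.mergeSort_eq_self _ (pairwise_ge_flatten_arithProg hc hsorted)]
  exact (lex_flatten_arithProg_shift c (c + 2) hbig).lt_sort_ge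

/-- Let a nonincreasing tuple of integers be given as the
concatenation of `s` consecutive blocks, where block `t` (of size `r t ≥ 1`, top
weight `m t`) is the arithmetic progression `m t, m t - c, …, m t - (r t - 1)c`
for a common even integer `c ≥ 0`. Replace each block by the progression with
top weight `m t + r t - 1` and common difference `c + 2`, and sort both multisets
into nonincreasing order. If some block has size `> 1`, the new sorted tuple is
strictly larger than the old one in the lexicographic order. -/
theorem stmt14 (s : ℕ) (r : Fin s → ℕ) (m : Fin s → ℤ) (c : ℤ)
    (hc : 0 ≤ c) (hceven : Even c) (hr : ∀ t, 1 ≤ r t)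
    (hsorted : ∀ t t' : Fin s, t < t' → m t' ≤ m t - c * ((r t : ℤ) - 1))
    (hbig : ∃ t, 1 < r t) :
    List.Lex (· < ·)
      (Multiset.sort
        (∑ t : Fin s, Multiset.map (fun j : ℕ => m t - c * (j : ℤ))
          (Multiset.range (r t))) (· ≥ ·))
      (Multiset.sort
        (∑ t : Fin s, Multiset.map
          (fun j : ℕ => (m t + (r t : ℤ) - 1) - (c + 2) * (j : ℤ))
          (Multiset.range (r t))) (· ≥ ·)) :=
  stmt14_general s r m c hc hsorted hbig
end
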